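/- arXiv:2205.15925 — 9 statements merged into one kernel-verified Lean document; each statement's English description precedes it below -/
import Mathlib

section
/- Let H be a nontrivial complex Hilbert space, let A be a bounded self-adjoint operator on H, and let V be a pure isometry on H such that V* ∘ A = A ∘ V. Then A is not invertible, i.e. A is not a unit of the ring of bounded operators on H. -/
open ContinuousLinearMap Filter

/-! Since `A V = V* A`, also `A Vⁿ = V*ⁿ A`. For `x ≠ 0` the vectors `Vⁿ x` all have norm `‖x‖`,
while their images `V*ⁿ (A x)` tend to `0` by purity; so `A` is not bounded below. -/

theorem tendsto_zero_of_isUnit_of_tendsto_apply {R M : Type*} [Semiring R] [TopologicalSpace M]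
    [AddCommMonoid M] [Module R M] {A : M →L[R] M} (hA : IsUnit A) {ι : Type*} {l : Filter ι}
    {u : ι → M} (h : Tendsto (fun i => A (u i)) l (nhds 0)) : Tendsto u l (nhds 0) := by
  obtain ⟨U, rfl⟩ := hA
  have hinv := ((U⁻¹ : (M →L[R] M)ˣ) : M →L[R] M).continuous.tendsto 0 |>.comp h
  simpa [Function.comp_def, ← mul_apply_eq_comp] using hinv

theorem eq_zero_of_tendsto_pow_apply_of_norm_map {𝕜 E : Type*} [NormedField 𝕜]
    [NormedAddCommGroup E] [NormedSpace 𝕜 E] {V : E →L[𝕜] E} (hV : ∀ x, ‖V x‖ = ‖x‖) {x : E}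
    (h : Tendsto (fun n : ℕ => (V ^ n) x) atTop (nhds 0)) : x = 0 := by
  have hnorm (n : ℕ) : ‖(V ^ n) x‖ = ‖x‖ := by
    induction n with
    | zero => simp
    | succ n ih => rw [pow_succ', mul_apply_eq_comp, hV, ih]
  have hconst := h.norm
  simp only [hnorm, norm_zero] at hconst
  exact norm_eq_zero.mp (tendsto_const_nhds_iff.mp hconst)

theorem hankel_wrt_pure_isometry_not_invertible_general
    {H : Type*} [NormedAddCommGroup H] [InnerProductSpace ℂ H] [CompleteSpace H]
    [Nontrivial H]
    (A V : H →L[ℂ] H)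
    (hV : adjoint V ∘L V = 1)
    (hVpure : ∀ h : H, Tendsto (fun n : ℕ => ((adjoint V) ^ n) h) atTop (nhds 0))
    (hHankel : adjoint V ∘L A = A ∘L V) :
    ¬ IsUnit A := by
  intro hA
  obtain ⟨x, hx⟩ := exists_ne (0 : H)
  have hpow (n : ℕ) : A * V ^ n = adjoint V ^ n * A :=
    (SemiconjBy.pow_right (hHankel.symm : SemiconjBy A V (adjoint V)) n).eq
  have hVx : Tendsto (fun n : ℕ => (V ^ n) x) atTop (nhds 0) :=
    tendsto_zero_of_isUnit_of_tendsto_apply hA <| by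
      simpa only [← mul_apply_eq_comp, hpow] using hVpure (A x)
  exact hx <| eq_zero_of_tendsto_pow_apply_of_norm_map (V.norm_map_iff_adjoint_comp_self.mpr hV) hVx

theorem hankel_wrt_pure_isometry_not_invertible
    {H : Type*} [NormedAddCommGroup H] [InnerProductSpace ℂ H] [CompleteSpace H]
    [Nontrivial H]
    (A V : H →L[ℂ] H)
    (hA : IsSelfAdjoint A)
    (hV : adjoint V ∘L V = 1)
    (hVpure : ∀ h : H, Tendsto (fun n : ℕ => ((adjoint V) ^ n) h) atTop (nhds 0))
    (hHankel : adjoint V ∘L A = A ∘L V) :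
    ¬ IsUnit A :=
  hankel_wrt_pure_isometry_not_invertible_general A V hV hVpure hHankel
end

section
/- Let H be a complex Hilbert space and let B be a bounded, self-adjoint, injective operator on H that is not invertible. Then there exists an injective sequence λ : ℕ → ℝ such that for every n, λ n ≠ 0 and (λ n : ℂ) belongs to the spectrum of B, and λ n → 0 as n → ∞. -/
open Filter

theorem exists_spectrum_sequence_tendsto_zero
    {H : Type*} [NormedAddCommGroup H] [InnerProductSpace ℂ H] [CompleteSpace H]
    (B : H →L[ℂ] H)
    (hB : IsSelfAdjoint B)
    (hinj : Function.Injective B)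
    (hnotinv : ¬ IsUnit B) :
    ∃ lam : ℕ → ℝ,
      Function.Injective lam ∧
      (∀ n, lam n ≠ 0) ∧
      (∀ n, (lam n : ℂ) ∈ spectrum ℂ B) ∧
      Tendsto lam atTop (nhds 0) := by
  have hnt : Nontrivial (H →L[ℂ] H) := by
    by_contra h
    rw [not_nontrivial_iff_subsingleton] at h
    exact hnotinv (isUnit_of_subsingleton B)
  have h0 : (0:ℝ) ∈ spectrum ℝ B := by
    rw [← spectrum.algebraMap_mem_iff ℂ]
    simpa using (spectrum.zero_mem_iff (R := ℂ)).mpr hnotinv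
  have hmem : ∀ x : ℝ, x ∈ spectrum ℝ B → (x : ℂ) ∈ spectrum ℂ B := by
    intro x hx
    simpa using spectrum.algebraMap_mem ℂ hx
  -- key: 0 is not isolated in the real spectrum
  have key : ∀ ε : ℝ, 0 < ε → ∃ x : ℝ, x ∈ spectrum ℝ B ∧ x ≠ 0 ∧ |x| < ε := by
    intro ε hε
    by_contra hcon
    push_neg at hcon
    have hiso : ∀ x ∈ spectrum ℝ B, x ≠ 0 → ε ≤ |x| := by
      intro x hx hx0
      by_contra hlt
      exact absurd (hcon x hx hx0) (not_le.mpr (lt_of_not_ge hlt))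
    set f : ℝ → ℝ := fun x => if x = 0 then 1 else 0 with hf
    have hfc : ContinuousOn f (spectrum ℝ B) := by
      intro x hx
      by_cases hx0 : x = 0
      · subst hx0
        have hev : ∀ᶠ y in nhdsWithin 0 (spectrum ℝ B), f y = 1 := by
          filter_upwards [self_mem_nhdsWithin,
            mem_nhdsWithin_of_mem_nhds (Metric.ball_mem_nhds (0:ℝ) hε)] with y hyS hyb
          have hy0 : y = 0 := by
            by_contra hy0
            have := hiso y hyS hy0
            rw [Metric.mem_ball, Real.dist_eq, sub_zero] at hyb
            linarith
          simp [hf, hy0]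
        have hf0 : f 0 = 1 := by simp [hf]
        rw [ContinuousWithinAt, hf0]
        exact tendsto_const_nhds.congr' (hev.mono fun y hy => hy.symm)
      · have hev : ∀ᶠ y in nhds x, f y = 0 := by
          filter_upwards [isOpen_compl_singleton.mem_nhds hx0] with y hy
          simp only [Set.mem_compl_iff, Set.mem_singleton_iff] at hy
          simp [hf, hy]
        exact ((continuousAt_const (y := (0:ℝ))).congr
          (hev.mono fun y hy => hy.symm)).continuousWithinAt
    set P : H →L[ℂ] H := cfc f B with hPdef
    have hmul : B * P = 0 := by
      have hzero : (fun x : ℝ => x * f x) = fun _ => 0 := by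
        funext x
        by_cases h : x = 0 <;> simp [hf, h]
      calc B * P = cfc (fun x : ℝ => x) B * cfc f B := by rw [cfc_id' ℝ B]
        _ = cfc (fun x : ℝ => x * f x) B := (cfc_mul _ _ B (continuousOn_id' _) hfc).symm
        _ = 0 := by rw [hzero]; simpa using cfc_zero ℝ B (A := H →L[ℂ] H)
    have hPne : P ≠ 0 := by
      intro hP0
      have hsp : spectrum ℝ P = f '' spectrum ℝ B := cfc_map_spectrum f B hB hfc
      have h1 : (1:ℝ) ∈ spectrum ℝ P := hsp ▸ ⟨0, h0, by simp [hf]⟩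
      rw [hP0, spectrum.zero_eq] at h1
      norm_num at h1
    obtain ⟨v, hv⟩ : ∃ v, P v ≠ 0 := by
      by_contra h
      push_neg at h
      exact hPne (ContinuousLinearMap.ext fun v => by simp [h v])
    have hBPv : B (P v) = 0 := by
      have := congrArg (fun T : H →L[ℂ] H => T v) hmul
      simpa [ContinuousLinearMap.mul_apply] using this
    exact hv (hinj (by simp [hBPv]))
  -- build the sequence
  have key' : ∀ ε : ℝ, ∃ x : ℝ, 0 < ε → x ∈ spectrum ℝ B ∧ x ≠ 0 ∧ |x| < ε := by
    intro ε
    by_cases hε : 0 < ε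
    · obtain ⟨x, h⟩ := key ε hε
      exact ⟨x, fun _ => h⟩
    · exact ⟨0, fun h => absurd h hε⟩
  choose F hF using key'
  set lam : ℕ → ℝ := fun n => Nat.rec (F 1) (fun n x => F (min |x| (1/((n:ℝ)+2)))) n with hlamdef
  have hlam0 : lam 0 = F 1 := rfl
  have hlamS : ∀ n, lam (n+1) = F (min |lam n| (1/((n:ℝ)+2))) := fun n => rfl
  have main : ∀ n, lam n ∈ spectrum ℝ B ∧ lam n ≠ 0 := by
    intro n
    induction n with
    | zero =>
      have := hF 1 one_pos
      exact ⟨this.1, this.2.1⟩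
    | succ n ih =>
      have hpos : 0 < min |lam n| (1/((n:ℝ)+2)) := by
        apply lt_min (abs_pos.mpr ih.2)
        positivity
      have := hF _ hpos
      rw [hlamS n]
      exact ⟨this.1, this.2.1⟩
  have hbound : ∀ n, |lam (n+1)| < min |lam n| (1/((n:ℝ)+2)) := by
    intro n
    have hpos : 0 < min |lam n| (1/((n:ℝ)+2)) := by
      apply lt_min (abs_pos.mpr (main n).2)
      positivity
    rw [hlamS n]
    exact (hF _ hpos).2.2
  have habs_anti : StrictAnti fun n => |lam n| := by
    apply strictAnti_nat_of_succ_lt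
    intro n
    exact lt_of_lt_of_le (hbound n) (min_le_left _ _)
  refine ⟨lam, ?_, fun n => (main n).2, fun n => hmem _ (main n).1, ?_⟩
  · intro m n hmn
    exact habs_anti.injective (by rw [hmn])
  · rw [← tendsto_add_atTop_iff_nat 1]
    rw [tendsto_zero_iff_abs_tendsto_zero]
    show Tendsto (fun n => |lam (n+1)|) atTop (nhds 0)
    apply squeeze_zero (fun n => abs_nonneg _) (g := fun n : ℕ => 1/((n:ℝ)+1))
    · intro n
      have h1 := lt_of_lt_of_le (hbound n) (min_le_right _ _)
      have h2 : (1:ℝ)/((n:ℝ)+2) ≤ 1/((n:ℝ)+1) := by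
        apply one_div_le_one_div_of_le <;> [positivity; linarith]
      linarith
    · exact tendsto_one_div_add_atTop_nhds_zero_nat
end

section
/- Let H be a complex Hilbert space and let A and B be closed, densely defined unbounded operators on H (LinearPMaps from H to H with dense domain and closed graph), with adjoints A† and B†. Suppose that dom(B†) ⊆ dom(A†) and that ‖A† x‖ ≤ ‖B† x‖ for all x ∈ dom(B†). Then there exists a bounded operator D on H with ‖D‖ ≤ 1 such that D (B† x) = A† x for every x ∈ dom(B†). -/
/-! The norm bound forces `ker B† ⊆ ker A†`, so `B† x ↦ A† x` is a well-defined contraction on the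
range of `B†`. It extends by continuity to the closure of that range, and precomposing with the
orthogonal projection onto this closure gives `D`. -/

namespace LinearMap

theorem denseRange_codRestrict_topologicalClosure_range {R E F : Type*} [Semiring R]
    [AddCommMonoid E] [Module R E] [AddCommMonoid F] [Module R F] [TopologicalSpace F]
    [ContinuousAdd F] [ContinuousConstSMul R F] (g : E →ₗ[R] F) :
    DenseRange (g.codRestrict (range g).topologicalClosure
      fun x ↦ (range g).le_topologicalClosure (mem_range_self g x)) := by
  rw [DenseRange, Subtype.dense_iff, ← Set.range_comp]
  exact subset_rfl

theorem exists_continuousLinearMap_comp_eq_of_norm_le_mul {𝕜 E F G : Type*} [RCLike 𝕜]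
    [AddCommGroup E] [Module 𝕜 E] [NormedAddCommGroup F] [InnerProductSpace 𝕜 F] [CompleteSpace F]
    [NormedAddCommGroup G] [NormedSpace 𝕜 G] [CompleteSpace G]
    (f : E →ₗ[𝕜] G) (g : E →ₗ[𝕜] F) {C : ℝ} (hC : 0 ≤ C) (h : ∀ x, ‖f x‖ ≤ C * ‖g x‖) :
    ∃ D : F →L[𝕜] G, ‖D‖ ≤ C ∧ ∀ x, D (g x) = f x := by
  set K := (range g).topologicalClosure
  set e : E →ₗ[𝕜] K := g.codRestrict K fun x ↦ (range g).le_topologicalClosure (mem_range_self g x)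
  have he : DenseRange e := denseRange_codRestrict_topologicalClosure_range g
  refine ⟨(f.extendOfNorm e).comp K.orthogonalProjectionOnto, ?_, fun x ↦ ?_⟩
  · calc _ ≤ ‖f.extendOfNorm e‖ * ‖K.orthogonalProjectionOnto‖ :=
          ContinuousLinearMap.opNorm_comp_le _ _
      _ ≤ C * 1 := by
          gcongr
          exacts [opNorm_extendOfNorm_le he hC h, K.orthogonalProjectionOnto_norm_le]
      _ = C := mul_one C
  · have hproj : K.orthogonalProjectionOnto (g x) = e x :=
      K.orthogonalProjectionOnto_mem_subspace_eq_self (e x)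
    rw [ContinuousLinearMap.comp_apply, hproj, extendOfNorm_eq he ⟨C, h⟩]

end LinearMap

theorem unbounded_douglas_factorization_general
    {H : Type*} [NormedAddCommGroup H] [InnerProductSpace ℂ H] [CompleteSpace H]
    (A B : H →ₗ.[ℂ] H)
    (hdom : B.adjoint.domain ≤ A.adjoint.domain)
    (hle : ∀ x : B.adjoint.domain,
      ‖A.adjoint ⟨(x : H), hdom x.2⟩‖ ≤ ‖B.adjoint x‖) :
    ∃ D : H →L[ℂ] H, ‖D‖ ≤ 1 ∧
      ∀ x : B.adjoint.domain, D (B.adjoint x) = A.adjoint ⟨(x : H), hdom x.2⟩ :=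
  LinearMap.exists_continuousLinearMap_comp_eq_of_norm_le_mul
    (A.adjoint.toFun.comp (Submodule.inclusion hdom)) B.adjoint.toFun zero_le_one
    fun x ↦ (hle x).trans_eq (one_mul _).symm

theorem unbounded_douglas_factorization
    {H : Type*} [NormedAddCommGroup H] [InnerProductSpace ℂ H] [CompleteSpace H]
    (A B : H →ₗ.[ℂ] H)
    (hA_dense : Dense (A.domain : Set H))
    (hB_dense : Dense (B.domain : Set H))
    (hA_closed : A.IsClosed)
    (hB_closed : B.IsClosed)
    (hdom : B.adjoint.domain ≤ A.adjoint.domain)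
    (hle : ∀ x : B.adjoint.domain,
      ‖A.adjoint ⟨(x : H), hdom x.2⟩‖ ≤ ‖B.adjoint x‖) :
    ∃ D : H →L[ℂ] H, ‖D‖ ≤ 1 ∧
      ∀ x : B.adjoint.domain, D (B.adjoint x) = A.adjoint ⟨(x : H), hdom x.2⟩ :=
  unbounded_douglas_factorization_general A B hdom hle
end

section
/- Let H be a complex Hilbert space, let A be a bounded, positive semidefinite, injective operator on H, and let U be a unitary operator on H (U* ∘ U = 1 = U ∘ U*) such that U* ∘ A = A ∘ U. Then U = U* and U ∘ U = 1, i.e. U is a symmetry (a self-adjoint unitary). -/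
open ContinuousLinearMap

theorem unitary_hankel_wrt_positive_injective_is_symmetry
    {H : Type*} [NormedAddCommGroup H] [InnerProductSpace ℂ H] [CompleteSpace H]
    (A U : H →L[ℂ] H)
    (hA : A.IsPositive)
    (hinj : Function.Injective A)
    (hU₁ : adjoint U ∘L U = 1)
    (hU₂ : U ∘L adjoint U = 1)
    (hHankel : adjoint U ∘L A = A ∘L U) :
    U = adjoint U ∧ U ∘L U = 1 := by
  set V := adjoint U with hV
  have hm : V * A = A * U := hHankel
  have hu1 : V * U = 1 := hU₁
  have hu2 : U * V = 1 := hU₂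
  -- B = V * V * A = A * U * U is positive (it equals V ∘ A ∘ U) and B * B = A * A
  have hB2 : V * (V * A) = A * (U * U) := by
    rw [hm, ← mul_assoc, hm, mul_assoc]
  have hBform : V * (V * A) = V * A * U := by
    conv_lhs => rw [hm]
    rw [← mul_assoc]
  have hBpos : (V * (V * A)).IsPositive := by
    rw [hBform]
    have := hA.conj_adjoint V
    rwa [adjoint_adjoint] at this
  have h0A : (0 : H →L[ℂ] H) ≤ A := by
    rw [ContinuousLinearMap.nonneg_iff_isPositive]; exact hA
  have h0B : (0 : H →L[ℂ] H) ≤ V * (V * A) := by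
    rw [ContinuousLinearMap.nonneg_iff_isPositive]; exact hBpos
  have hBB : (V * (V * A)) * (V * (V * A)) = A * A := by
    nth_rewrite 2 [hB2]
    calc (V * (V * A)) * (A * (U * U))
        = V * (V * A) * A * U * U := by noncomm_ring
      _ = V * (A * U) * A * U * U := by rw [hm]
      _ = V * A * (U * A) * U * U := by noncomm_ring
      _ = A * U * (U * A) * U * U := by rw [hm]
      _ = A * U * U * (A * U) * U := by noncomm_ring
      _ = A * U * U * (V * A) * U := by rw [hm]
      _ = A * U * (U * V) * (A * U) := by noncomm_ring
      _ = A * U * (A * U) := by rw [hu2]; noncomm_ring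
      _ = A * U * (V * A) := by rw [hm]
      _ = A * (U * V) * A := by noncomm_ring
      _ = A * A := by rw [hu2]; noncomm_ring
  have hBA : V * (V * A) = A := by
    have h1 := CFC.sqrt_unique hBB h0B
    have h2 := CFC.sqrt_unique (rfl : A * A = A * A) h0A
    rw [h1] at h2; exact h2
  -- hence A * (U * U) = A, so U * U = 1 by injectivity of A
  have hAUU : A * (U * U) = A := by rw [← hB2]; exact hBA
  have hUU : U * U = 1 := by
    ext x
    have : A ((U * U) x) = A x := by
      have := congrArg (fun T : H →L[ℂ] H => T x) hAUU
      simpa using this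
    simpa using hinj this
  have hUV : U = V := by
    calc U = (V * U) * U := by rw [hu1, one_mul]
      _ = V * (U * U) := by rw [mul_assoc]
      _ = V := by rw [hUU, mul_one]
  exact ⟨hUV, hUU⟩
end

section
/- Let H be a complex Hilbert space, let A be a bounded, positive semidefinite, injective operator on H, and let V be an isometry on H with V* ∘ A = A ∘ V. Let K := ⋂_{n ∈ ℕ} range(V^n), a closed subspace of H. Then: (1) V maps K onto K (Submodule.map V K = K) and V (V x) = x for every x ∈ K; (2) A maps K into K; (3) A maps each of the subspaces {x ∈ K : V x = x} and {x ∈ K : V x = -x} into itself; and (4) if moreover A ∘ V is positive semidefinite, then V x = x for every x ∈ K. -/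
open ContinuousLinearMap
open scoped InnerProductSpace ComplexConjugate

section Aux


variable {H : Type*} [NormedAddCommGroup H] [InnerProductSpace ℂ H] [CompleteSpace H]

lemma aux_sa (A : H →L[ℂ] H) (hA : A.IsPositive) (x y : H) :
    ⟪x, A y⟫_ℂ = ⟪A x, y⟫_ℂ := by
  rw [← ContinuousLinearMap.adjoint_inner_left, hA.isSelfAdjoint.adjoint_eq]

lemma aux_cs (A : H →L[ℂ] H) (hA : A.IsPositive) (u v : H) :
    ‖(⟪A u, v⟫_ℂ)‖ * ‖(⟪A u, v⟫_ℂ)‖ ≤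
      RCLike.re ⟪A u, u⟫_ℂ * RCLike.re ⟪A v, v⟫_ℂ := by
  letI c : PreInnerProductSpace.Core ℂ H :=
    { inner := fun x y => ⟪A x, y⟫_ℂ
      conj_inner_symm := fun x y => by
        simp only [inner]
        rw [inner_conj_symm, aux_sa A hA]
      re_inner_nonneg := fun x => hA.re_inner_nonneg_left x
      add_left := fun x y z => by simp only [inner, map_add, inner_add_left]
      smul_left := fun x y r => by simp only [inner, map_smul, inner_smul_left] }
  have h := @InnerProductSpace.Core.inner_mul_inner_self_le ℂ H _ _ _ c u v
  have hswap : ‖(⟪A v, u⟫_ℂ)‖ = ‖(⟪A u, v⟫_ℂ)‖ := by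
    rw [← aux_sa A hA u v, norm_inner_symm]
  calc ‖(⟪A u, v⟫_ℂ)‖ * ‖(⟪A u, v⟫_ℂ)‖
      = ‖(⟪A u, v⟫_ℂ)‖ * ‖(⟪A v, u⟫_ℂ)‖ := by rw [hswap]
    _ ≤ RCLike.re ⟪A u, u⟫_ℂ * RCLike.re ⟪A v, v⟫_ℂ := h



variable {H : Type*} [NormedAddCommGroup H] [InnerProductSpace ℂ H] [CompleteSpace H]

lemma aux_growth (e : ℕ → ℝ) (C : ℝ) (h0 : ∀ m, 0 ≤ e m) (hC : ∀ m, e m ≤ C)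
    (hcs : ∀ m, e (m + 1) * e (m + 1) ≤ e m * e (m + 2)) : e 1 ≤ e 0 := by
  by_contra hlt
  push_neg at hlt
  have he0 : 0 < e 0 := by
    rcases (h0 0).lt_or_eq with h | h
    · exact h
    · exfalso; nlinarith [hcs 0, h0 1, h0 2]
  set r := e 1 / e 0 with hr
  have hr1 : 1 < r := (one_lt_div he0).2 hlt
  have key : ∀ m, 0 < e m ∧ r * e m ≤ e (m + 1) := by
    intro m
    induction m with
    | zero =>
      refine ⟨he0, ?_⟩
      rw [hr, div_mul_cancel₀]
      exact ne_of_gt he0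
    | succ n ih =>
      obtain ⟨hpos, hle⟩ := ih
      have hpos1 : 0 < e (n + 1) := lt_of_lt_of_le (by nlinarith) hle
      refine ⟨hpos1, ?_⟩
      nlinarith [hcs n, mul_le_mul_of_nonneg_right hle (le_of_lt hpos1)]
  have geo : ∀ m, e 0 * r ^ m ≤ e m := by
    intro m
    induction m with
    | zero => simp
    | succ n ih =>
      have h1 := (key n).2
      have h2 : (0:ℝ) < r := lt_trans one_pos hr1
      calc e 0 * r ^ (n + 1) = r * (e 0 * r ^ n) := by ring
        _ ≤ r * e n := by nlinarith
        _ ≤ e (n + 1) := h1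
  obtain ⟨m, hm⟩ := pow_unbounded_of_one_lt (C / e 0) hr1
  rw [div_lt_iff₀ he0] at hm
  nlinarith [geo m, hC m]


end Aux

theorem wold_unitary_part_of_hankel_positive
    {H : Type*} [NormedAddCommGroup H] [InnerProductSpace ℂ H] [CompleteSpace H]
    (A V : H →L[ℂ] H)
    (hA : A.IsPositive)
    (hinj : Function.Injective A)
    (hV : adjoint V ∘L V = 1)
    (hHankel : adjoint V ∘L A = A ∘L V)
    (K : Submodule ℂ H)
    (hK : K = ⨅ n : ℕ, LinearMap.range ((V ^ n : H →L[ℂ] H) : H →ₗ[ℂ] H)) :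
    Submodule.map (V : H →ₗ[ℂ] H) K = K ∧
    (∀ x ∈ K, V (V x) = x) ∧
    (∀ x ∈ K, A x ∈ K) ∧
    (∀ x ∈ K, V x = x → V (A x) = A x) ∧
    (∀ x ∈ K, V x = -x → V (A x) = -(A x)) ∧
    ((A ∘L V).IsPositive → ∀ x ∈ K, V x = x) := by
  subst hK
  -- pointwise versions of hypotheses
  have hVV : ∀ x : H, adjoint V (V x) = x := by
    intro x
    have := congrArg (fun (T : H →L[ℂ] H) => T x) hV
    simpa using this
  have hH : ∀ x : H, adjoint V (A x) = A (V x) := by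
    intro x
    have := congrArg (fun (T : H →L[ℂ] H) => T x) hHankel
    simpa using this
  have hinner : ∀ x y : H, ⟪V x, V y⟫_ℂ = ⟪x, y⟫_ℂ := by
    intro x y
    rw [← ContinuousLinearMap.adjoint_inner_left, hVV]
  have hVnorm : ∀ x : H, ‖V x‖ = ‖x‖ := by
    intro x
    rw [@norm_eq_sqrt_re_inner ℂ, hinner, ← @norm_eq_sqrt_re_inner ℂ]
  -- membership in K
  have hmem : ∀ x : H, x ∈ (⨅ n : ℕ, LinearMap.range ((V ^ n : H →L[ℂ] H) : H →ₗ[ℂ] H)) ↔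
      ∀ n : ℕ, ∃ y, (V ^ n) y = x := by
    intro x
    simp only [Submodule.mem_iInf, LinearMap.mem_range, ContinuousLinearMap.coe_coe]
  have hcomm : ∀ (n : ℕ) (y : H), (V ^ n) (V y) = V ((V ^ n) y) := by
    intro n y
    rw [← ContinuousLinearMap.mul_apply, ← pow_succ, pow_succ', ContinuousLinearMap.mul_apply]
  set K := ⨅ n : ℕ, LinearMap.range ((V ^ n : H →L[ℂ] H) : H →ₗ[ℂ] H) with hKdef
  have hVK : ∀ x ∈ K, V x ∈ K := by
    intro x hx
    rw [hmem] at hx ⊢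
    intro n
    obtain ⟨y, hy⟩ := hx n
    exact ⟨V y, by rw [hcomm, hy]⟩
  have hVstarK : ∀ x ∈ K, adjoint V x ∈ K ∧ V (adjoint V x) = x := by
    intro x hx
    rw [hmem] at hx
    constructor
    · rw [hmem]
      intro n
      obtain ⟨y, hy⟩ := hx (n + 1)
      refine ⟨y, ?_⟩
      have hx' : x = V ((V ^ n) y) := by
        rw [← hy, pow_succ', ContinuousLinearMap.mul_apply]
      rw [hx', hVV]
    · obtain ⟨y, hy⟩ := hx 1
      have h1 : V y = x := by simpa using hy
      rw [← h1, hVV]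

  -- zero criterion from Cauchy-Schwarz
  have hAzero : ∀ s : H, RCLike.re ⟪A s, s⟫_ℂ = 0 → s = 0 := by
    intro s hs
    have h := aux_cs A hA s (A s)
    rw [hs, zero_mul] at h
    have h2 : ⟪A s, A s⟫_ℂ = 0 := by
      have := norm_nonneg (⟪A s, A s⟫_ℂ)
      have hn : ‖(⟪A s, A s⟫_ℂ)‖ = 0 := by nlinarith
      exact norm_eq_zero.mp hn
    have hAs : A s = 0 := inner_self_eq_zero.mp h2
    exact hinj (by simpa using hAs)
  -- moving V across the form
  have hBmove : ∀ u v : H, ⟪A (V u), v⟫_ℂ = ⟪A u, V v⟫_ℂ := by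
    intro u v
    rw [← hH, ContinuousLinearMap.adjoint_inner_left]
  -- forward sequence bounds
  have hVpow_norm : ∀ (m : ℕ) (z : H), ‖(V ^ m) z‖ = ‖z‖ := by
    intro m z
    induction m with
    | zero => simp
    | succ n ih =>
      rw [pow_succ', ContinuousLinearMap.mul_apply, hVnorm, ih]
  have hbound : ∀ z : H, RCLike.re ⟪A z, z⟫_ℂ ≤ ‖A‖ * (‖z‖ * ‖z‖) := by
    intro z
    calc RCLike.re ⟪A z, z⟫_ℂ ≤ ‖(⟪A z, z⟫_ℂ)‖ := RCLike.re_le_norm _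
      _ ≤ ‖A z‖ * ‖z‖ := norm_inner_le_norm _ _
      _ ≤ ‖A‖ * ‖z‖ * ‖z‖ := by
          have := A.le_opNorm z
          nlinarith [norm_nonneg z]
      _ = ‖A‖ * (‖z‖ * ‖z‖) := by ring
  have hsq : ∀ c : ℂ, (c.re) * (c.re) ≤ ‖c‖ * ‖c‖ := by
    intro c
    have h1 := Complex.abs_re_le_norm c
    have h0 : |c.re| * |c.re| = c.re * c.re := abs_mul_abs_self _
    have h2 : ‖c‖ = ‖c‖ := rfl
    nlinarith [abs_nonneg c.re, norm_nonneg c]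
  -- key step: the quadratic form is invariant under V on K
  have claimE : ∀ x ∈ K, RCLike.re ⟪A (V x), V x⟫_ℂ = RCLike.re ⟪A x, x⟫_ℂ := by
    intro x hx
    by_cases hb : RCLike.re ⟪A x, x⟫_ℂ = 0
    · have hx0 : x = 0 := hAzero x hb
      rw [hx0]
      simp
    -- forward sequence
    set e : ℕ → ℝ := fun m => RCLike.re ⟪A ((V ^ m) x), (V ^ m) x⟫_ℂ with he
    have hepos : ∀ m, 0 ≤ e m := fun m => hA.re_inner_nonneg_left _
    have heC : ∀ m, e m ≤ ‖A‖ * (‖x‖ * ‖x‖) := by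
      intro m
      have := hbound ((V ^ m) x)
      rwa [hVpow_norm] at this
    have hecs : ∀ m, e (m + 1) * e (m + 1) ≤ e m * e (m + 2) := by
      intro m
      have hid : ⟪A ((V ^ m) x), (V ^ (m + 2)) x⟫_ℂ
          = ⟪A ((V ^ (m + 1)) x), (V ^ (m + 1)) x⟫_ℂ := by
        have e1 : (V ^ (m + 1)) x = V ((V ^ m) x) := by
          rw [pow_succ', ContinuousLinearMap.mul_apply]
        have e2 : (V ^ (m + 2)) x = V ((V ^ (m + 1)) x) := by
          rw [pow_succ', ContinuousLinearMap.mul_apply]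
        rw [e2, e1]
        exact (hBmove _ _).symm
      have hc := aux_cs A hA ((V ^ m) x) ((V ^ (m + 2)) x)
      have hre : e (m + 1) = (⟪A ((V ^ m) x), (V ^ (m + 2)) x⟫_ℂ).re := by
        rw [hid]; rfl
      calc e (m + 1) * e (m + 1)
          ≤ ‖(⟪A ((V ^ m) x), (V ^ (m + 2)) x⟫_ℂ)‖
            * ‖(⟪A ((V ^ m) x), (V ^ (m + 2)) x⟫_ℂ)‖ := by rw [hre]; exact hsq _
        _ ≤ e m * e (m + 2) := hc
    have hEforward : e 1 ≤ e 0 := aux_growth e _ hepos heC hecs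
    -- backward sequence
    set y : ℕ → H := fun m => ((adjoint V) ^ m) x with hy
    have hyK : ∀ m, y m ∈ K := by
      intro m
      induction m with
      | zero => simpa [hy] using hx
      | succ n ih =>
        have : y (n + 1) = adjoint V (y n) := by
          simp only [hy, pow_succ', ContinuousLinearMap.mul_apply]
        rw [this]
        exact (hVstarK _ ih).1
    have hyV : ∀ m, V (y (m + 1)) = y m := by
      intro m
      have h1 : y (m + 1) = adjoint V (y m) := by
        simp only [hy, pow_succ', ContinuousLinearMap.mul_apply]
      rw [h1]
      exact (hVstarK _ (hyK m)).2
    have hynorm : ∀ m, ‖y m‖ = ‖x‖ := by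
      intro m
      induction m with
      | zero => simp [hy]
      | succ n ih => rw [← ih, ← hyV n, hVnorm]
    set d : ℕ → ℝ := fun m => RCLike.re ⟪A (y m), y m⟫_ℂ with hd
    have hdpos : ∀ m, 0 ≤ d m := fun m => hA.re_inner_nonneg_left _
    have hdC : ∀ m, d m ≤ ‖A‖ * (‖x‖ * ‖x‖) := by
      intro m
      have := hbound (y m)
      rwa [hynorm] at this
    have hdcs : ∀ m, d (m + 1) * d (m + 1) ≤ d m * d (m + 2) := by
      intro m
      have hid : ⟪A (y m), y (m + 2)⟫_ℂ = ⟪A (y (m + 1)), y (m + 1)⟫_ℂ := by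
        have e1 : y m = V (y (m + 1)) := (hyV m).symm
        have e2 : y (m + 1) = V (y (m + 2)) := (hyV (m + 1)).symm
        rw [e1, hBmove, ← e2]
      have hc := aux_cs A hA (y m) (y (m + 2))
      have hre : d (m + 1) = (⟪A (y m), y (m + 2)⟫_ℂ).re := by
        rw [hid]; rfl
      calc d (m + 1) * d (m + 1)
          ≤ ‖(⟪A (y m), y (m + 2)⟫_ℂ)‖ * ‖(⟪A (y m), y (m + 2)⟫_ℂ)‖ := by
            rw [hre]; exact hsq _
        _ ≤ d m * d (m + 2) := hc
    have hDforward : d 1 ≤ d 0 := aux_growth d _ hdpos hdC hdcs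
    -- identify e 0 and d 0
    have he0 : e 0 = RCLike.re ⟪A x, x⟫_ℂ := by simp [he]
    have hd0 : d 0 = RCLike.re ⟪A x, x⟫_ℂ := by simp [hd, hy]
    -- triple Cauchy-Schwarz : (e 0)^2 ≤ d 1 * e 1
    have htriple : e 0 * e 0 ≤ d 1 * e 1 := by
      have hid : ⟪A (y 1), V x⟫_ℂ = ⟪A x, x⟫_ℂ := by
        rw [← hBmove, hyV 0]
        simp [hy]
      have hc := aux_cs A hA (y 1) (V x)
      have hre : e 0 = (⟪A (y 1), V x⟫_ℂ).re := by rw [hid, he0]; rfl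
      have he1 : e 1 = RCLike.re ⟪A (V x), V x⟫_ℂ := by
        simp only [he, pow_one]
      calc e 0 * e 0 ≤ ‖(⟪A (y 1), V x⟫_ℂ)‖ * ‖(⟪A (y 1), V x⟫_ℂ)‖ := by
            rw [hre]; exact hsq _
        _ ≤ RCLike.re ⟪A (y 1), y 1⟫_ℂ * RCLike.re ⟪A (V x), V x⟫_ℂ := hc
        _ = d 1 * e 1 := by rw [he1]
    have hbpos : 0 < e 0 := by
      rw [he0]
      exact lt_of_le_of_ne (hA.re_inner_nonneg_left x) (Ne.symm hb)
    have he1e0 : e 1 = e 0 := by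
      have h1 : d 1 ≤ e 0 := by rw [he0, ← hd0]; exact hDforward
      have h2 : e 1 ≤ e 0 := hEforward
      nlinarith [hepos 1, hdpos 1]
    have : e 1 = RCLike.re ⟪A (V x), V x⟫_ℂ := by simp only [he, pow_one]
    rw [← this, he1e0, he0]
  -- V is an involution on K
  have claimV2 : ∀ x ∈ K, V (V x) = x := by
    intro x hx
    have hVxK : V x ∈ K := hVK x hx
    have h1 : RCLike.re ⟪A (V (V x)), V (V x)⟫_ℂ = RCLike.re ⟪A x, x⟫_ℂ := by
      rw [claimE _ hVxK, claimE _ hx]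
    have h2 : ⟪A (V (V x)), x⟫_ℂ = ⟪A (V x), V x⟫_ℂ := hBmove (V x) x
    have h3 : RCLike.re ⟪A (V x), V x⟫_ℂ = RCLike.re ⟪A x, x⟫_ℂ := claimE _ hx
    have hzero : RCLike.re ⟪A (V (V x) - x), V (V x) - x⟫_ℂ = 0 := by
      rw [map_sub, inner_sub_left, inner_sub_right, inner_sub_right]
      have h4 : RCLike.re ⟪A x, V (V x)⟫_ℂ = RCLike.re ⟪A (V (V x)), x⟫_ℂ := by
        rw [← aux_sa A hA x (V (V x)), inner_re_symm]
      simp only [map_sub]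
      rw [h4, h2] 
      rw [h1, h3]
      ring
    have := hAzero _ hzero
    exact sub_eq_zero.mp this
  -- A maps K to K
  have hAK : ∀ x ∈ K, A x ∈ K := by
    intro x hx
    -- V (V (A x)) = A x
    have hz2 : adjoint V (adjoint V (A x)) = A x := by
      rw [hH, hH, claimV2 x hx]
    set z := A x with hzdef
    have hzi : ⟪z, V (V z)⟫_ℂ = ⟪z, z⟫_ℂ := by
      rw [← ContinuousLinearMap.adjoint_inner_left,
        ← ContinuousLinearMap.adjoint_inner_left, hz2]
    have hVVz : V (V z) = z := by
      have hnorm : ‖z - V (V z)‖ ^ 2 = 0 := by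
        rw [@norm_sub_sq ℂ]
        rw [hzi]
        rw [hVnorm, hVnorm]
        have : RCLike.re ⟪z, z⟫_ℂ = ‖z‖ ^ 2 := by
          rw [@inner_self_eq_norm_sq ℂ]
        rw [this]
        ring
      have := pow_eq_zero_iff (n := 2) (by norm_num) |>.mp hnorm
      have := norm_eq_zero.mp this
      rw [sub_eq_zero] at this
      exact this.symm
    have hiter : ∀ n : ℕ, (V ^ n) ((V ^ n) z) = z := by
      intro n
      induction n with
      | zero => simp
      | succ k ih =>
        have hp : ∀ w : H, (V ^ (k + 1)) w = (V ^ k) (V w) := by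
          intro w
          rw [pow_succ, ContinuousLinearMap.mul_apply]
        rw [hp, hp, ← hcomm k (V z), hVVz, ih]
    rw [hmem]
    intro n
    exact ⟨(V ^ n) z, hiter n⟩
  -- part 1
  have hmap : Submodule.map (V : H →ₗ[ℂ] H) K = K := by
    apply le_antisymm
    · rintro _ ⟨x, hx, rfl⟩
      exact hVK x hx
    · intro x hx
      exact ⟨V x, hVK x hx, claimV2 x hx⟩
  -- part 4
  have hfix : ∀ x ∈ K, V x = x → V (A x) = A x := by
    intro x hx hVx
    have h1 : adjoint V (A x) = A x := by rw [hH, hVx]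
    have h2 : V (adjoint V (A x)) = A x := (hVstarK _ (hAK x hx)).2
    rw [h1] at h2
    exact h2
  -- part 5
  have hanti : ∀ x ∈ K, V x = -x → V (A x) = -(A x) := by
    intro x hx hVx
    have h1 : adjoint V (A x) = -(A x) := by rw [hH, hVx, map_neg]
    have h2 : V (adjoint V (A x)) = A x := (hVstarK _ (hAK x hx)).2
    rw [h1, map_neg] at h2
    rw [← neg_neg (V (A x)), h2]
  -- part 6
  have hpos : (A ∘L V).IsPositive → ∀ x ∈ K, V x = x := by
    intro hAV x hx
    have hneg : ∀ u ∈ K, V u = -u → u = 0 := by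
      intro u hu hVu
      have h1 : 0 ≤ RCLike.re ⟪(A ∘L V) u, u⟫_ℂ := hAV.re_inner_nonneg_left u
      have h2 : ⟪(A ∘L V) u, u⟫_ℂ = -⟪A u, u⟫_ℂ := by
        rw [ContinuousLinearMap.comp_apply, hVu, map_neg, inner_neg_left]
      rw [h2] at h1
      have h3 : 0 ≤ RCLike.re ⟪A u, u⟫_ℂ := hA.re_inner_nonneg_left u
      have h4 : RCLike.re ⟪A u, u⟫_ℂ = 0 := by
        have : RCLike.re (-⟪A u, u⟫_ℂ) = -RCLike.re ⟪A u, u⟫_ℂ := by simp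
        rw [this] at h1
        linarith
      exact hAzero u h4
    have huK : V x - x ∈ K := Submodule.sub_mem _ (hVK x hx) hx
    have hVu : V (V x - x) = -(V x - x) := by
      rw [map_sub, claimV2 x hx]
      abel
    have := hneg _ huK hVu
    have := sub_eq_zero.mp this
    rw [this]
  exact ⟨hmap, claimV2, hAK, hfix, hanti, hpos⟩
end

section
/- Let H be a complex Hilbert space, let A be a bounded, self-adjoint, injective operator on H, let J be a symmetry (J = J*, J ∘ J = 1) and let P be a bounded, positive semidefinite, injective operator with A = J ∘ P and J ∘ P = P ∘ J. Let V be an isometry on H such that V* ∘ A = A ∘ V and A ∘ V is positive semidefinite, and set W := J ∘ V. Then: (1) W is an isometry; (2) W* ∘ P = P ∘ W; (3) W* ∘ P = V* ∘ A (in particular W* ∘ P is positive semidefinite); (4) Submodule.map J ((range V)ᗮ) = (range W)ᗮ; and (5) with K := ⋂_{n ∈ ℕ} range(W^n), P maps K into K and W x = x for every x ∈ K. -/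
open ContinuousLinearMap
open scoped ComplexInnerProductSpace

section auxDPH

variable {H : Type*} [NormedAddCommGroup H] [InnerProductSpace ℂ H] [CompleteSpace H]


private lemma dph_sa (T : H →L[ℂ] H) (hT : IsSelfAdjoint T) (a b : H) :
    ⟪T a, b⟫ = ⟪a, T b⟫ := by
  conv_lhs => rw [← hT.adjoint_eq]
  exact adjoint_inner_left T b a

private lemma dph_resymm (T : H →L[ℂ] H) (hT : IsSelfAdjoint T) (a b : H) :
    Complex.re ⟪T a, b⟫ = Complex.re ⟪T b, a⟫ := by
  rw [dph_sa T hT a b, ← inner_conj_symm]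
  exact Complex.conj_re _

private lemma dph_cs (T : H →L[ℂ] H) (hT : T.IsPositive) (u v : H) :
    (Complex.re ⟪T u, v⟫)^2 ≤ Complex.re ⟪T u, u⟫ * Complex.re ⟪T v, v⟫ := by
  have hexp : ∀ t : ℝ, 0 ≤ Complex.re ⟪T u, u⟫ + 2*t*Complex.re ⟪T u, v⟫
      + t^2 * Complex.re ⟪T v, v⟫ := by
    intro t
    have h0 := hT.2 (u + (t:ℂ) • v)
    rw [reApplyInnerSelf] at h0
    rw [map_add, map_smul, inner_add_left, inner_add_right, inner_add_right,
      inner_smul_left, inner_smul_right, inner_smul_left, inner_smul_right] at h0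
    have hconj : ⟪T v, u⟫ = (starRingEnd ℂ) ⟪T u, v⟫ := by
      rw [dph_sa T hT.isSelfAdjoint v u]; exact (inner_conj_symm _ _).symm
    rw [hconj] at h0
    simp only [RCLike.re_to_complex, Complex.add_re, Complex.mul_re, Complex.conj_re,
      Complex.conj_im, Complex.ofReal_re, Complex.ofReal_im] at h0
    nlinarith [h0]
  have hvv := hT.2 v
  rw [reApplyInnerSelf] at hvv
  by_cases hv : Complex.re ⟪T v, v⟫ = 0
  · have hb : Complex.re ⟪T u, v⟫ = 0 := by
      by_contra hb
      have h1 := hexp (-(Complex.re ⟪T u, u⟫ + 1)/(2*Complex.re ⟪T u, v⟫))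
      rw [hv] at h1
      have h2 : 2*(-(Complex.re ⟪T u, u⟫ + 1)/(2*Complex.re ⟪T u, v⟫))*Complex.re ⟪T u, v⟫
          = -(Complex.re ⟪T u, u⟫ + 1) := by field_simp
      rw [h2] at h1
      simp at h1
      linarith [h1]
    rw [hb, hv]; simp
  · have hv' : 0 < Complex.re ⟪T v, v⟫ := lt_of_le_of_ne hvv (Ne.symm hv)
    have hc : Complex.re ⟪T v, v⟫ ≠ 0 := ne_of_gt hv'
    have h1 := hexp (-(Complex.re ⟪T u, v⟫)/Complex.re ⟪T v, v⟫)
    have heq : Complex.re ⟪T u, u⟫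
        + 2*(-(Complex.re ⟪T u, v⟫)/Complex.re ⟪T v, v⟫)*Complex.re ⟪T u, v⟫
        + (-(Complex.re ⟪T u, v⟫)/Complex.re ⟪T v, v⟫)^2 * Complex.re ⟪T v, v⟫
        = Complex.re ⟪T u, u⟫ - (Complex.re ⟪T u, v⟫)^2/Complex.re ⟪T v, v⟫ := by
      field_simp; ring
    rw [heq] at h1
    have h3 : (Complex.re ⟪T u, v⟫)^2/Complex.re ⟪T v, v⟫ ≤ Complex.re ⟪T u, u⟫ := by linarith
    have := (div_le_iff₀ hv').mp h3
    linarith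

private lemma dph_null (T : H →L[ℂ] H) (hT : T.IsPositive) (d : H)
    (h : Complex.re ⟪T d, d⟫ = 0) : T d = 0 := by
  have h1 := dph_cs T hT d (T d)
  rw [h] at h1
  simp at h1
  have h2 : Complex.re ⟪T d, T d⟫ = 0 := by
    have := inner_self_eq_norm_sq_to_K (𝕜 := ℂ) (T d)
    rw [this]; exact h1
  have h3 : (‖T d‖ : ℝ)^2 = 0 := by
    rw [← inner_self_eq_norm_sq (𝕜 := ℂ) (T d)]; exact h2
  simpa using h3

private lemma dph_mono (a : ℤ → ℝ) (M : ℝ) (hpos : ∀ n, 0 < a n) (hbd : ∀ n, a n ≤ M)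
    (hconv : ∀ n : ℤ, (a n)^2 ≤ a (n+1) * a (n-1)) : ∀ n : ℤ, a (n+1) ≤ a n := by
  have hr : ∀ n m : ℤ, n ≤ m → a (n+1) * a m ≤ a n * a (m+1) := by
    intro n
    refine Int.le_induction ?_ ?_
    · exact le_of_eq (mul_comm _ _)
    · intro m hm ih
      have h1 : (a (m+1))^2 ≤ a (m+2) * a m := by
        have := hconv (m+1)
        rw [show m+1+1 = m+2 by ring, show m+1-1 = m by ring] at this
        exact this
      have hint1 := mul_le_mul_of_nonneg_left h1 (hpos (n+1)).le
      have hint2 := mul_le_mul_of_nonneg_right ih (hpos (m+2)).le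
      have hp := hpos (m+1)
      rw [show m+1+1 = m+2 by ring]
      nlinarith [hint1, hint2, hp]
  intro n
  by_contra hcon
  push_neg at hcon
  set r := a (n+1) / a n with hrdef
  have hr1 : 1 < r := (one_lt_div (hpos n)).mpr hcon
  have hr0 : 0 < r := lt_trans one_pos hr1
  have growth : ∀ m : ℤ, n ≤ m → a n * r^(m-n).toNat ≤ a m := by
    refine Int.le_induction ?_ ?_
    · simp
    · intro m hm ih
      have h2 : (m+1-n).toNat = (m-n).toNat + 1 := by omega
      rw [h2, pow_succ]
      have hstep : a m * r ≤ a (m+1) := by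
        rw [hrdef, mul_div_assoc']
        rw [div_le_iff₀ (hpos n)]
        have := hr n m hm
        nlinarith [this]
      calc a n * (r^(m-n).toNat * r) = (a n * r^(m-n).toNat) * r := by ring
        _ ≤ a m * r := mul_le_mul_of_nonneg_right ih hr0.le
        _ ≤ a (m+1) := hstep
  obtain ⟨k, hk⟩ := pow_unbounded_of_one_lt (M / a n) hr1
  have hg := growth (n + k) (by omega)
  rw [show ((n+(k:ℤ))-n).toNat = k by omega] at hg
  have hb := hbd (n+k)
  have hM : M < a n * r^k := by
    have := (div_lt_iff₀ (hpos n)).mp hk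
    nlinarith [this]
  linarith

end auxDPH

theorem doubly_positive_from_hankel_polar
    {H : Type*} [NormedAddCommGroup H] [InnerProductSpace ℂ H] [CompleteSpace H]
    (A J P V : H →L[ℂ] H)
    (hA : IsSelfAdjoint A)
    (hAinj : Function.Injective A)
    (hJsa : IsSelfAdjoint J)
    (hJ2 : J ∘L J = 1)
    (hP : P.IsPositive)
    (hPinj : Function.Injective P)
    (hpolar : A = J ∘L P)
    (hcomm : J ∘L P = P ∘L J)
    (hV : adjoint V ∘L V = 1)
    (hHankel : adjoint V ∘L A = A ∘L V)
    (hpos : (A ∘L V).IsPositive)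
    (W : H →L[ℂ] H)
    (hW : W = J ∘L V)
    (K : Submodule ℂ H)
    (hK : K = ⨅ n : ℕ, LinearMap.range ((W ^ n : H →L[ℂ] H) : H →ₗ[ℂ] H)) :
    adjoint W ∘L W = 1 ∧
    adjoint W ∘L P = P ∘L W ∧
    adjoint W ∘L P = adjoint V ∘L A ∧
    Submodule.map (J : H →ₗ[ℂ] H) ((LinearMap.range (V : H →ₗ[ℂ] H))ᗮ) = (LinearMap.range (W : H →ₗ[ℂ] H))ᗮ ∧
    (∀ x ∈ K, P x ∈ K) ∧
    (∀ x ∈ K, W x = x) := by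
  have hJJ : ∀ y, J (J y) = y := by
    intro y
    have := ContinuousLinearMap.ext_iff.mp hJ2 y
    simpa [comp_apply] using this
  have hVV : ∀ y, adjoint V (V y) = y := by
    intro y
    have := ContinuousLinearMap.ext_iff.mp hV y
    simpa [comp_apply] using this
  have hWadj : adjoint W = adjoint V ∘L J := by
    rw [hW, adjoint_comp, hJsa.adjoint_eq]
  -- part 1
  have part1 : adjoint W ∘L W = 1 := by
    rw [hWadj, hW]
    ext z
    simp only [comp_apply, ContinuousLinearMap.one_apply]
    rw [hJJ, hVV]
  -- part 3
  have part3 : adjoint W ∘L P = adjoint V ∘L A := by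
    rw [hWadj, hpolar]
    ext z
    simp [comp_apply]
  -- P ∘ W = A ∘ V
  have hQ : P ∘L W = A ∘L V := by
    rw [hW, hpolar]
    ext z
    simp only [comp_apply]
    have := ContinuousLinearMap.ext_iff.mp hcomm (V z)
    simpa [comp_apply] using this.symm
  -- part 2
  have part2 : adjoint W ∘L P = P ∘L W := by
    rw [part3, hHankel, hQ]
  -- part 4
  have part4 : Submodule.map (J : H →ₗ[ℂ] H) ((LinearMap.range (V : H →ₗ[ℂ] H))ᗮ) = (LinearMap.range (W : H →ₗ[ℂ] H))ᗮ := by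
    have hJinner : ∀ a b : H, ⟪J a, J b⟫ = ⟪a, b⟫ := by
      intro a b
      rw [dph_sa J hJsa a (J b), hJJ]
    ext x
    simp only [Submodule.mem_map, Submodule.mem_orthogonal]
    constructor
    · rintro ⟨y, hy, rfl⟩ u hu
      obtain ⟨z, rfl⟩ := hu
      rw [hW]
      show ⟪(J ∘L V) z, J y⟫ = 0
      rw [comp_apply, hJinner]
      exact hy (V z) ⟨z, rfl⟩
    · intro hx
      refine ⟨J x, ?_, hJJ x⟩
      intro u hu
      obtain ⟨z, rfl⟩ := hu
      change ⟪V z, J x⟫ = 0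
      rw [← dph_sa J hJsa (V z) x]
      have : J (V z) = W z := by rw [hW]; rfl
      rw [this]
      exact hx (W z) ⟨z, rfl⟩
  -- pointwise facts
  have hWW : ∀ z, adjoint W (W z) = z := by
    intro z
    have := ContinuousLinearMap.ext_iff.mp part1 z
    simpa [comp_apply] using this
  have hPWpt : ∀ z, P (W z) = adjoint W (P z) := by
    intro z
    have := ContinuousLinearMap.ext_iff.mp part2 z
    simpa [comp_apply] using this.symm
  have hQpos : (P ∘L W).IsPositive := by rw [hQ]; exact hpos
  have hinnW : ∀ a b : H, ⟪W a, W b⟫ = ⟪a, b⟫ := by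
    intro a b
    conv_rhs => rw [← hWW b]
    exact (adjoint_inner_right W a (W b)).symm
  have hnormW : ∀ z, ‖W z‖ = ‖z‖ := by
    intro z
    rw [@norm_eq_sqrt_re_inner ℂ, @norm_eq_sqrt_re_inner ℂ _ _ _ _ z, hinnW]
  have hpownorm : ∀ (k : ℕ) (z : H), ‖(W^k) z‖ = ‖z‖ := by
    intro k
    induction k with
    | zero => intro z; simp
    | succ k ih =>
      intro z
      rw [pow_succ, ContinuousLinearMap.mul_apply, ih, hnormW]
  have hKmem : ∀ x, x ∈ K ↔ ∀ n : ℕ, ∃ z, (W^n) z = x := by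
    intro x
    rw [hK]
    simp [Submodule.mem_iInf, LinearMap.mem_range, Module.End.pow_apply]
  have hWK : ∀ x ∈ K, W x ∈ K := by
    intro x hx
    rw [hKmem] at hx ⊢
    intro n
    cases n with
    | zero => exact ⟨W x, by simp⟩
    | succ n =>
      obtain ⟨z, hz⟩ := hx n
      exact ⟨z, by rw [pow_succ', ContinuousLinearMap.mul_apply, hz]⟩
  have hWstarK : ∀ x ∈ K, adjoint W x ∈ K := by
    intro x hx
    rw [hKmem] at hx ⊢
    intro n
    obtain ⟨z, hz⟩ := hx (n+1)
    refine ⟨z, ?_⟩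
    rw [← hz, pow_succ', ContinuousLinearMap.mul_apply, hWW]
  have hWWstar : ∀ x ∈ K, W (adjoint W x) = x := by
    intro x hx
    obtain ⟨z, hz⟩ := (hKmem x).mp hx 1
    rw [pow_one] at hz
    rw [← hz, hWW]
  have hfixmem : ∀ z, W z = z → z ∈ K := by
    intro z hz
    rw [hKmem]
    intro n
    refine ⟨z, ?_⟩
    induction n with
    | zero => simp
    | succ n ih => rw [pow_succ, ContinuousLinearMap.mul_apply, hz, ih]
  have hfixadj : ∀ z, adjoint W z = z → W z = z := by
    intro z hz
    have h1 : ⟪W z, z⟫ = ⟪z, z⟫ := by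
      rw [← adjoint_inner_right, hz]
    have h2 : ‖W z - z‖^2 = 0 := by
      rw [@norm_sub_sq ℂ, hnormW, h1]
      have : RCLike.re ⟪z, z⟫ = ‖z‖^2 := by
        rw [@inner_self_eq_norm_sq ℂ]
      rw [this]
      ring
    have := pow_eq_zero_iff (n := 2) (by norm_num) |>.mp h2
    rw [norm_eq_zero, sub_eq_zero] at this
    exact this
  have hshift : ∀ (z : H) (n m : ℕ),
      ⟪P ((W^(n+1)) z), (W^m) z⟫ = ⟪P ((W^n) z), (W^(m+1)) z⟫ := by
    intro z n m
    have h1 : P ((W^(n+1)) z) = adjoint W (P ((W^n) z)) := by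
      rw [pow_succ', ContinuousLinearMap.mul_apply, hPWpt]
    rw [h1, pow_succ', ContinuousLinearMap.mul_apply]
    exact adjoint_inner_left W ((W^m) z) (P ((W^n) z))
  -- the key fixed point property
  have hfixK : ∀ x ∈ K, W x = x := by
    intro x hx
    by_cases hx0 : x = 0
    · rw [hx0]; exact map_zero W
    set y : ℕ → H := fun N => (⇑(adjoint W))^[N] x with hy
    have hy0 : y 0 = x := rfl
    have hysucc : ∀ N, y (N+1) = adjoint W (y N) := by
      intro N
      rw [hy]
      exact Function.iterate_succ_apply' _ _ _
    have hyK : ∀ N, y N ∈ K := by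
      intro N
      induction N with
      | zero => exact hx
      | succ N ih => rw [hysucc]; exact hWstarK _ ih
    have hyW : ∀ N, W (y (N+1)) = y N := by
      intro N
      rw [hysucc]
      exact hWWstar _ (hyK N)
    have hynorm : ∀ N, ‖y N‖ = ‖x‖ := by
      intro N
      induction N with
      | zero => rfl
      | succ N ih =>
        rw [← ih, ← hyW N, hnormW]
    set w : ℤ → H := fun n => (W^((n + n.natAbs).toNat)) (y n.natAbs) with hwdef
    have wspec : ∀ (n : ℤ) (N : ℕ), n.natAbs ≤ N → w n = (W^((n+N).toNat)) (y N) := by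
      intro n N hN
      induction N with
      | zero =>
        have h0 : n.natAbs = 0 := Nat.le_zero.mp hN
        have hn0 : n = 0 := Int.natAbs_eq_zero.mp h0
        subst hn0
        rfl
      | succ N ih =>
        rcases Nat.lt_or_ge N n.natAbs with hlt | hge
        · have : n.natAbs = N + 1 := by omega
          rw [hwdef]
          simp only [this]
        · have h1 := ih hge
          rw [h1]
          have h2 : (n+((N+1:ℕ):ℤ)).toNat = (n+(N:ℤ)).toNat + 1 := by omega
          rw [h2, pow_succ, ContinuousLinearMap.mul_apply, hyW]
    have hwnorm : ∀ n : ℤ, ‖w n‖ = ‖x‖ := by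
      intro n
      rw [hwdef]
      simp only []
      rw [hpownorm, hynorm]
    set a : ℤ → ℝ := fun n => Complex.re ⟪P (w n), w n⟫ with hadef
    have havals : ∀ n, a n = Complex.re ⟪P (w n), w n⟫ := fun n => rfl
    have cross : ∀ n : ℤ, ⟪P (w (n+1)), w (n-1)⟫ = ⟪P (w n), w n⟫ := by
      intro n
      have h1 : w (n+1) = (W^((n+1+((n.natAbs+1:ℕ):ℤ)).toNat)) (y (n.natAbs+1)) :=
        wspec _ _ (by omega)
      have h2 : w (n-1) = (W^((n-1+((n.natAbs+1:ℕ):ℤ)).toNat)) (y (n.natAbs+1)) :=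
        wspec _ _ (by omega)
      have h3 : w n = (W^((n+((n.natAbs+1:ℕ):ℤ)).toNat)) (y (n.natAbs+1)) :=
        wspec _ _ (by omega)
      set N := n.natAbs + 1 with hN
      set k := (n-1+(N:ℤ)).toNat with hk
      have hk1 : (n+(N:ℤ)).toNat = k+1 := by omega
      have hk2 : (n+1+(N:ℤ)).toNat = k+2 := by omega
      rw [h1, h2, h3, hk1, hk2]
      exact hshift (y N) (k+1) k
    have hapos : ∀ n : ℤ, 0 < a n := by
      intro n
      have hnn := hP.2 (w n)
      rw [reApplyInnerSelf] at hnn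
      rcases lt_or_eq_of_le hnn with h | h
      · rw [havals]; exact h
      · exfalso
        have hz : P (w n) = 0 := dph_null P hP (w n) h.symm
        have hwz : w n = 0 := hPinj (by rw [hz, map_zero])
        have := hwnorm n
        rw [hwz, norm_zero] at this
        exact hx0 (norm_eq_zero.mp this.symm)
    have habd : ∀ n : ℤ, a n ≤ ‖P‖ * ‖x‖^2 := by
      intro n
      rw [havals]
      calc Complex.re ⟪P (w n), w n⟫ ≤ ‖(⟪P (w n), w n⟫ : ℂ)‖ := Complex.re_le_norm _
        _ = ‖(⟪P (w n), w n⟫ : ℂ)‖ := rfl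
        _ ≤ ‖P (w n)‖ * ‖w n‖ := norm_inner_le_norm _ _
        _ ≤ (‖P‖ * ‖w n‖) * ‖w n‖ := mul_le_mul_of_nonneg_right (P.le_opNorm _) (norm_nonneg _)
        _ = ‖P‖ * ‖w n‖^2 := by ring
        _ = ‖P‖ * ‖x‖^2 := by rw [hwnorm]
    have hconv : ∀ n : ℤ, (a n)^2 ≤ a (n+1) * a (n-1) := by
      intro n
      have h0 : a n = Complex.re ⟪P (w (n+1)), w (n-1)⟫ := by
        rw [havals, cross n]
      rw [h0, havals, havals]
      exact dph_cs P hP (w (n+1)) (w (n-1))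
    have hm1 := dph_mono a (‖P‖*‖x‖^2) hapos habd hconv
    have hm2 : ∀ n : ℤ, a (-(n+1)) ≤ a (-n) := by
      have hcv : ∀ n : ℤ, ((fun n => a (-n)) n)^2 ≤ (fun n => a (-n)) (n+1) * (fun n => a (-n)) (n-1) := by
        intro n
        simp only []
        have := hconv (-n)
        rw [show -(n+1) = -n-1 by ring, show -(n-1) = -n+1 by ring]
        linarith [this, mul_comm (a (-n+1)) (a (-n-1))]
      have := dph_mono (fun n => a (-n)) (‖P‖*‖x‖^2) (fun n => hapos _) (fun n => habd _) hcv
      intro n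
      exact this n
    have e1 : a 1 = a 0 := by
      have h1 := hm1 0
      have h2 := hm2 (-1)
      norm_num at h1 h2
      linarith
    have e2 : a (-1) = a 0 := by
      have h1 := hm1 (-1)
      have h2 := hm2 0
      norm_num at h1 h2
      linarith
    have hcross0 : Complex.re ⟪P (w 1), w (-1)⟫ = a 0 := by
      have h := cross 0
      rw [show (0:ℤ)+1 = 1 by norm_num, show (0:ℤ)-1 = -1 by norm_num] at h
      rw [havals]
      exact congrArg Complex.re h
    have hd : Complex.re ⟪P (w 1 - w (-1)), w 1 - w (-1)⟫ = 0 := by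
      rw [map_sub, inner_sub_left, inner_sub_right, inner_sub_right]
      have hsym : Complex.re ⟪P (w (-1)), w 1⟫ = Complex.re ⟪P (w 1), w (-1)⟫ :=
        dph_resymm P hP.isSelfAdjoint (w (-1)) (w 1)
      simp only [Complex.sub_re]
      have hv1 := havals 1
      have hv2 := havals (-1)
      linarith [e1, e2, hcross0, hsym, hv1, hv2]
    have heq : w 1 = w (-1) := by
      have h8 : P (w 1 - w (-1)) = 0 := dph_null P hP _ hd
      have h9 : w 1 - w (-1) = 0 := hPinj (by rw [h8, map_zero])
      exact sub_eq_zero.mp h9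
    have hw1 : w 1 = (W^2) (y 1) := by
      have h := wspec 1 1 (by norm_num)
      rw [show ((1:ℤ)+((1:ℕ):ℤ)).toNat = 2 by decide] at h
      exact h
    have hwm1 : w (-1) = y 1 := by
      have h := wspec (-1) 1 (by norm_num)
      rw [show ((-1:ℤ)+((1:ℕ):ℤ)).toNat = 0 by decide] at h
      rw [h, pow_zero, ContinuousLinearMap.one_apply]
    have hkey : (W^2) (y 1) = y 1 := by rw [← hw1, heq, hwm1]
    have hxy : W (y 1) = x := (hyW 0).trans hy0
    have hWx2 : W (W x) = x := by
      conv_lhs => rw [← hxy]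
      have : W (W (W (y 1))) = W ((W^2) (y 1)) := by
        rw [pow_two, ContinuousLinearMap.mul_apply]
      rw [this, hkey, hxy]
    set v := x - W x with hv
    have hWv : W v = -v := by
      rw [hv, map_sub, hWx2]
      abel
    have h5 := hQpos.2 v
    rw [reApplyInnerSelf] at h5
    have h5' : (P ∘L W) v = -(P v) := by rw [comp_apply, hWv, map_neg]
    rw [h5', inner_neg_left] at h5
    have h5n : 0 ≤ -Complex.re ⟪P v, v⟫ := by simpa using h5
    have h6 := hP.2 v
    rw [reApplyInnerSelf] at h6
    have h7 : Complex.re ⟪P v, v⟫ = 0 := le_antisymm (by linarith [h5n]) h6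
    have h8 : P v = 0 := dph_null P hP v h7
    have h9 : v = 0 := hPinj (by rw [h8, map_zero])
    rw [hv] at h9
    exact (sub_eq_zero.mp h9).symm
  refine ⟨part1, part2, part3, part4, ?_, hfixK⟩
  intro x hx
  have hWx := hfixK x hx
  have h1 : P x = adjoint W (P x) := by
    conv_lhs => rw [← hWx]
    exact hPWpt x
  exact hfixmem _ (hfixadj _ h1.symm)
end

section
/- Let H be a complex Hilbert space, let S be a bounded, self-adjoint, injective operator on H, and let T₀ be a densely defined unbounded operator on H such that S (T₀ x) = x for every x ∈ dom T₀ (i.e. T₀ is a restriction of S⁻¹). Then 1 - i•S is a unit of the ring of bounded operators on H, and its inverse X := (1 - i•S)⁻¹ satisfies Submodule.map X ((range T₀)ᗮ) = (range(T₀ + i))ᗮ, where range T₀ := {T₀ x : x ∈ dom T₀} and range(T₀ + i) := {T₀ x + i•x : x ∈ dom T₀}. In particular, X restricts to a continuous linear bijection from (range T₀)ᗮ onto (range(T₀ + i))ᗮ. -/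
open ContinuousLinearMap

theorem krein_deficiency_space_lemma
    {H : Type*} [NormedAddCommGroup H] [InnerProductSpace ℂ H] [CompleteSpace H]
    (S : H →L[ℂ] H)
    (hS : IsSelfAdjoint S)
    (hSinj : Function.Injective S)
    (T₀ : H →ₗ.[ℂ] H)
    (hdense : Dense (T₀.domain : Set H))
    (hrestr : ∀ x : T₀.domain, S (T₀ x) = x) :
    IsUnit (1 - Complex.I • S) ∧
    Submodule.map ((Ring.inverse (1 - Complex.I • S) : H →L[ℂ] H) : H →ₗ[ℂ] H) ((LinearMap.range T₀.toFun)ᗮ) =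
      (LinearMap.range (T₀.toFun + Complex.I • T₀.domain.subtype))ᗮ ∧
    ∃ e : ((LinearMap.range T₀.toFun)ᗮ) ≃L[ℂ]
        ((LinearMap.range (T₀.toFun + Complex.I • T₀.domain.subtype))ᗮ : Submodule ℂ H),
      ∀ u : ((LinearMap.range T₀.toFun)ᗮ : Submodule ℂ H),
        (e u : H) = Ring.inverse (1 - Complex.I • S) (u : H) := by
  set A : H →L[ℂ] H := 1 - Complex.I • S with hAdef
  -- A is a unit
  have hA : IsUnit A := by
    have h1 : (-Complex.I) ∉ spectrum ℂ S := by
      intro h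
      have := hS.mem_spectrum_eq_re h
      simp [Complex.ext_iff] at this
    have h3 : IsUnit (S - algebraMap ℂ (H →L[ℂ] H) (-Complex.I)) := by
      rw [← neg_sub]; exact (spectrum.notMem_iff.mp h1).neg
    have h4 : A = (-Complex.I) • (S - algebraMap ℂ (H →L[ℂ] H) (-Complex.I)) := by
      rw [hAdef, Algebra.algebraMap_eq_smul_one, smul_sub, smul_smul]
      simp [Complex.I_mul_I]
      abel
    rw [h4]
    have h5 : IsUnit ((-Complex.I) • (1 : H →L[ℂ] H)) := by
      refine ⟨⟨_, ((-Complex.I)⁻¹ : ℂ) • (1 : H →L[ℂ] H), ?_, ?_⟩, rfl⟩ <;>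
        rw [smul_mul_assoc, one_mul, smul_smul] <;>
          simp [inv_neg, Complex.inv_I, Complex.I_mul_I]
    rw [← smul_one_mul]
    exact h5.mul h3
  set X : H →L[ℂ] H := Ring.inverse A with hXdef
  have hXA : ∀ v : H, X (A v) = v := by
    intro v
    have := Ring.inverse_mul_cancel A hA
    calc X (A v) = (X * A) v := rfl
      _ = v := by rw [this]; rfl
  have hAX : ∀ v : H, A (X v) = v := by
    intro v
    have := Ring.mul_inverse_cancel A hA
    calc A (X v) = (A * X) v := rfl
      _ = v := by rw [this]; rfl
  -- adjoint of A
  have hadj : ContinuousLinearMap.adjoint A = 1 + Complex.I • S := by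
    have h : ContinuousLinearMap.adjoint A = star A := rfl
    rw [h, hAdef, star_sub, star_smul, star_one, hS.star_eq]
    simp [Complex.star_def, Complex.conj_I, sub_neg_eq_add]
  have hBapp : ∀ x : T₀.domain,
      ContinuousLinearMap.adjoint A (T₀ x) = T₀ x + Complex.I • (x : H) := by
    intro x
    rw [hadj]
    simp [hrestr x]
  set K : Submodule ℂ H := LinearMap.range T₀.toFun with hKdef
  set L : Submodule ℂ H :=
    LinearMap.range (T₀.toFun + Complex.I • T₀.domain.subtype) with hLdef
  have hLmem : ∀ v : H, v ∈ L ↔ ∃ x : T₀.domain, T₀ x + Complex.I • (x : H) = v := by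
    intro v
    rw [hLdef, LinearMap.mem_range]
    rfl
  -- key characterization
  have key : ∀ u : H, u ∈ Lᗮ ↔ A u ∈ Kᗮ := by
    intro u
    simp only [Submodule.mem_orthogonal]
    constructor
    · intro h w hw
      obtain ⟨x, rfl⟩ := hw
      have : inner ℂ (T₀ x : H) (A u) =
          inner ℂ (ContinuousLinearMap.adjoint A (T₀ x)) u :=
        (ContinuousLinearMap.adjoint_inner_left A u (T₀ x)).symm
      show (inner ℂ (T₀ x : H) (A u) : ℂ) = 0
      rw [this, hBapp x]
      exact h _ ((hLmem _).mpr ⟨x, rfl⟩)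
    · intro h v hv
      obtain ⟨x, rfl⟩ := (hLmem v).mp hv
      rw [← hBapp x, ContinuousLinearMap.adjoint_inner_left]
      exact h _ ⟨x, rfl⟩
  -- the submodule equality
  have hmap : Submodule.map (X : H →ₗ[ℂ] H) Kᗮ = Lᗮ := by
    ext u
    constructor
    · rintro ⟨v, hv, rfl⟩
      exact (key _).mpr (by rwa [ContinuousLinearMap.coe_coe, hAX v])
    · intro hu
      exact ⟨A u, (key u).mp hu, hXA u⟩
  refine ⟨hA, hmap, ?_⟩
  -- the continuous linear equivalence
  have hXmem : ∀ u : (Kᗮ : Submodule ℂ H), X (u : H) ∈ Lᗮ := fun u => by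
    rw [← hmap]; exact ⟨u, u.2, rfl⟩
  have hAmem : ∀ v : (Lᗮ : Submodule ℂ H), A (v : H) ∈ Kᗮ := fun v => (key v).mp v.2
  refine ⟨{ toFun := fun u => ⟨X u, hXmem u⟩
            invFun := fun v => ⟨A v, hAmem v⟩
            map_add' := by intro u v; ext; simp
            map_smul' := by intro c u; ext; simp
            left_inv := by intro u; ext; exact hAX u
            right_inv := by intro v; ext; exact hXA v
            continuous_toFun := Continuous.subtype_mk
              (X.continuous.comp continuous_subtype_val) hXmem
            continuous_invFun := Continuous.subtype_mk
              (A.continuous.comp continuous_subtype_val) hAmem }, fun u => rfl⟩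
end

section
/- Let H be a complex Hilbert space and let A be a bounded, self-adjoint, injective operator on H that is not invertible. Let T₀ be a densely defined, closed unbounded operator on H such that A (T₀ x) = x for every x ∈ dom T₀ (i.e. T₀ is a closed, symmetric restriction of A⁻¹; symmetry is automatic). Then there exists an isometry V on H such that: (1) V* ∘ A = A ∘ V; (2) for every y ∈ H, A (V y) ∈ dom T₀ and T₀ (A (V y)) = V y; (3) dom T₀ = {A (V y) : y ∈ H}; and consequently (4) range V = {T₀ x : x ∈ dom T₀}. -/
set_option synthInstance.maxHeartbeats 1000000
set_option maxHeartbeats 1000000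

open ContinuousLinearMap

theorem isometry_from_closed_symmetric_restriction
    {H : Type*} [NormedAddCommGroup H] [InnerProductSpace ℂ H] [CompleteSpace H]
    (A : H →L[ℂ] H)
    (hA : IsSelfAdjoint A)
    (hinj : Function.Injective A)
    (hnotinv : ¬ IsUnit A)
    (T₀ : H →ₗ.[ℂ] H)
    (hdense : Dense (T₀.domain : Set H))
    (hclosed : T₀.IsClosed)
    (hrestr : ∀ x : T₀.domain, A (T₀ x) = x) :
    ∃ V : H →L[ℂ] H,
      adjoint V ∘L V = 1 ∧
      adjoint V ∘L A = A ∘L V ∧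
      (∀ y : H, ∃ hy : A (V y) ∈ T₀.domain, T₀ ⟨A (V y), hy⟩ = V y) ∧
      (T₀.domain : Set H) = Set.range (fun y : H => A (V y)) ∧
      LinearMap.range T₀.toFun = LinearMap.range (V : H →ₗ[ℂ] H) := by
  classical
  -- the closed subspace M = range T₀
  set M : Submodule ℂ H := LinearMap.range T₀.toFun with hMdef
  have hMmem : ∀ z : H, z ∈ M ↔ ∃ x : T₀.domain, T₀ x = z := fun z => Iff.rfl
  have hMT : ∀ x : T₀.domain, T₀ x ∈ M := fun x => ⟨x, rfl⟩
  have hMset : (M : Set H) = (fun z => (A z, z)) ⁻¹' (T₀.graph : Set (H × H)) := by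
    ext z
    simp only [Set.mem_preimage, SetLike.mem_coe, LinearPMap.mem_graph_iff]
    constructor
    · rintro ⟨x, rfl⟩
      exact ⟨x, (hrestr x).symm, rfl⟩
    · rintro ⟨y, _, hy2⟩
      exact ⟨y, hy2⟩
  have hMc : IsClosed (M : Set H) := by
    rw [hMset]
    exact hclosed.preimage (A.continuous.prodMk continuous_id)
  haveI : CompleteSpace M := hMc.completeSpace_coe
  -- the orthogonal projection onto M
  set P : H →L[ℂ] H := M.subtypeL ∘L M.orthogonalProjectionOnto with hPdef
  have hP : IsSelfAdjoint P := isSelfAdjoint_starProjection M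
  have hPmem : ∀ y : H, P y ∈ M := fun y => (M.orthogonalProjectionOnto y).2
  have hPid : ∀ m ∈ M, P m = m := by
    intro m hm
    exact Submodule.starProjection_eq_self_iff.mpr hm
  have hPzero : ∀ y : H, P y = 0 ↔ y ∈ Mᗮ := by
    intro y
    rw [← Submodule.orthogonalProjectionOnto_eq_zero_iff (K := M)]
    constructor
    · intro h
      exact Subtype.ext (h.trans M.coe_zero.symm)
    · intro h
      simpa [hPdef] using congrArg (Subtype.val) h
  -- B = P ∘ A
  set B : H →L[ℂ] H := P ∘L A with hBdef
  have hBadj : adjoint B = A ∘L P := by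
    rw [hBdef, adjoint_comp, hA.adjoint_eq, hP.adjoint_eq]
  have hBker : ∀ x : H, B x = 0 → x = 0 := by
    intro x hx
    have hAx : A x ∈ Mᗮ := (hPzero (A x)).mp hx
    refine hdense.eq_zero_of_inner_right ℂ fun v' hv' => ?_
    obtain ⟨v, rfl⟩ : ∃ v : T₀.domain, (v : H) = v' := ⟨⟨v', hv'⟩, rfl⟩
    have h1 : (↑v : H) = A (T₀ v) := (hrestr v).symm
    calc (inner ℂ ((↑v : H)) x : ℂ) = inner ℂ (A (T₀ v)) x := by rw [h1]
      _ = inner ℂ (T₀ v) (A x) := hA.isSymmetric (T₀ v) x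
      _ = 0 := (Submodule.mem_orthogonal M (A x)).mp hAx _ (hMT v)
  -- the square root S of B* B
  have hC : (0 : H →L[ℂ] H) ≤ star B * B := star_mul_self_nonneg B
  set S : H →L[ℂ] H := CFC.sqrt (star B * B) with hSdef
  have hS0 : (0 : H →L[ℂ] H) ≤ S := CFC.sqrt_nonneg _
  have hSsa : IsSelfAdjoint S := hS0.isSelfAdjoint
  have hS2 : S * S = star B * B := by rw [hSdef, ← sq]; exact CFC.sq_sqrt _ hC
  have hnormBS : ∀ x : H, ‖S x‖ = ‖B x‖ := by
    intro x
    have h1 : (inner ℂ (S x) (S x) : ℂ) = inner ℂ (B x) (B x) := by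
      calc (inner ℂ (S x) (S x) : ℂ) = inner ℂ x (S (S x)) := hSsa.isSymmetric _ _
        _ = inner ℂ x ((S * S) x) := rfl
        _ = inner ℂ x ((star B * B) x) := by rw [hS2]
        _ = inner ℂ x (adjoint B (B x)) := by rw [star_eq_adjoint]; rfl
        _ = inner ℂ (B x) (B x) := adjoint_inner_right B _ _
    have h2 : (‖S x‖ : ℝ) ^ 2 = ‖B x‖ ^ 2 := by
      rw [inner_self_eq_norm_sq_to_K, inner_self_eq_norm_sq_to_K] at h1
      exact_mod_cast h1
    have := congrArg Real.sqrt h2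
    rwa [Real.sqrt_sq (norm_nonneg _), Real.sqrt_sq (norm_nonneg _)] at this
  have hSker : ∀ x : H, S x = 0 → x = 0 := by
    intro x hx
    apply hBker
    have : ‖B x‖ = 0 := by rw [← hnormBS, hx, norm_zero]
    exact norm_eq_zero.mp this
  -- S has dense range
  set Slm : H →ₗ[ℂ] H := ↑S with hSlm
  have hSinj : Function.Injective Slm := by
    intro a b hab
    have : S (a - b) = 0 := by
      simp only [map_sub]
      have hab' : S a = S b := hab
      rw [hab', sub_self]
    have := hSker _ this
    exact sub_eq_zero.mp this
  set RS : Submodule ℂ H := LinearMap.range Slm with hRS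
  have hRSbot : RSᗮ = ⊥ := by
    rw [Submodule.eq_bot_iff]
    intro y hy
    apply hSker
    have h1 : ∀ x : H, (inner ℂ x (S y) : ℂ) = 0 := by
      intro x
      have := (Submodule.mem_orthogonal RS y).mp hy (S x) ⟨x, rfl⟩
      calc (inner ℂ x (S y) : ℂ) = inner ℂ (S x) y := (hSsa.isSymmetric x y).symm
        _ = 0 := this
    have := h1 (S y)
    exact inner_self_eq_zero.mp this
  have hRSdense : Dense (RS : Set H) := by
    have : RS.topologicalClosure = ⊤ := Submodule.topologicalClosure_eq_top_iff.mpr hRSbot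
    rwa [Submodule.dense_iff_topologicalClosure_eq_top]
  have hSdr : DenseRange (⇑S) := by
    have : Set.range ⇑S = (RS : Set H) := by
      ext z; exact ⟨fun ⟨x, hx⟩ => ⟨x, hx⟩, fun ⟨x, hx⟩ => ⟨x, hx⟩⟩
    rw [DenseRange, this]; exact hRSdense
  -- the isometry W, defined on range S by W (S x) = B x and extended by continuity
  set eqv : H ≃ₗ[ℂ] RS := LinearEquiv.ofInjective Slm hSinj with heqv
  have heqv_coe : ∀ x : H, ((eqv x : RS) : H) = S x := fun x => rfl
  set f₀ : RS →ₗ[ℂ] H := (↑B : H →ₗ[ℂ] H) ∘ₗ (eqv.symm : RS →ₗ[ℂ] H) with hf₀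
  have hf₀app : ∀ x : H, f₀ (eqv x) = B x := by
    intro x
    simp only [hf₀, LinearMap.comp_apply]
    rw [LinearEquiv.coe_coe, LinearEquiv.symm_apply_apply]
    rfl
  have hcoed : ∀ d : RS, (d : H) = S (eqv.symm d) := by
    intro d
    rw [← heqv_coe (eqv.symm d), LinearEquiv.apply_symm_apply]
  have hf₀norm : ∀ d : RS, ‖f₀ d‖ = ‖d‖ := by
    intro d
    have h1 : f₀ d = B (eqv.symm d) := rfl
    rw [h1, ← hnormBS, ← Submodule.norm_coe d, hcoed d]
  set f : RS →L[ℂ] H := f₀.mkContinuous 1 (fun d => by rw [hf₀norm d, one_mul]) with hf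
  have hfapp : ∀ d : RS, f d = f₀ d := fun d => rfl
  set e : RS →L[ℂ] H := RS.subtypeL with he
  have h_e : IsUniformInducing ⇑e := isometry_subtype_coe.isUniformInducing
  have h_dense : DenseRange ⇑e := by
    have : Set.range ⇑e = (RS : Set H) := Subtype.range_coe
    rw [DenseRange, this]; exact hRSdense
  set W : H →L[ℂ] H := f.extend e with hW
  have hWeq : ∀ x : H, W (S x) = B x := by
    intro x
    have h1 : W (e (eqv x)) = f (eqv x) := ContinuousLinearMap.extend_eq f h_dense h_e (eqv x)
    have h2 : e (eqv x) = S x := heqv_coe x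
    rw [h2] at h1
    rw [h1, hfapp, hf₀app]
  -- W is an isometry
  have hWnorm : ∀ z : H, ‖W z‖ = ‖z‖ := by
    have h : (fun z : H => ‖W z‖) = fun z : H => ‖z‖ := by
      refine hSdr.equalizer (continuous_norm.comp W.continuous) continuous_norm
        (funext fun x => ?_)
      show ‖W (S x)‖ = ‖S x‖
      rw [hWeq x, hnormBS x]
    intro z
    exact congrFun h z
  have hWisom : adjoint W ∘L W = 1 := W.norm_map_iff_adjoint_comp_self.mp hWnorm
  -- A ∘ W = S, hence self-adjoint
  have hAW : A ∘L W = S := by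
    apply ContinuousLinearMap.coeFn_injective
    show ⇑(A ∘L W) = ⇑S
    refine hSdr.equalizer (A ∘L W).continuous S.continuous (funext fun x => ?_)
    show A (W (S x)) = S (S x)
    rw [hWeq x]
    have h1 : A (B x) = (star B * B) x := by
      rw [star_eq_adjoint]
      show A (B x) = adjoint B (B x)
      rw [hBadj]
      show A (B x) = A (P (B x))
      have hBxM : B x ∈ M := hPmem (A x)
      rw [hPid _ hBxM]
    have h2 : S (S x) = (star B * B) x := by rw [← ContinuousLinearMap.mul_apply, hS2]
    rw [h1, ← h2]
  have hAWsa : IsSelfAdjoint (A ∘L W) := by rw [hAW]; exact hSsa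
  have hadjWA : adjoint W ∘L A = A ∘L W := by
    calc adjoint W ∘L A = adjoint W ∘L adjoint A := by rw [hA.adjoint_eq]
      _ = adjoint (A ∘L W) := (adjoint_comp A W).symm
      _ = A ∘L W := hAWsa.adjoint_eq
  -- range of W is M
  have hWmemM : ∀ z : H, W z ∈ M := by
    have hsub : Set.range ⇑S ⊆ ⇑W ⁻¹' (M : Set H) := by
      rintro _ ⟨x, rfl⟩
      simp only [Set.mem_preimage, SetLike.mem_coe, hWeq x]
      exact hPmem (A x)
    have hclosed' : IsClosed (⇑W ⁻¹' (M : Set H)) := hMc.preimage W.continuous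
    intro z
    have : z ∈ closure (Set.range ⇑S) := hSdr z
    have := closure_mono hsub this
    rwa [hclosed'.closure_eq] at this
  -- M is the closure of range B
  set RB : Submodule ℂ H := LinearMap.range (↑B : H →ₗ[ℂ] H) with hRB
  have hRBorth : RBᗮ = Mᗮ := by
    ext y
    constructor
    · intro hy
      have h1 : ∀ x : H, (inner ℂ x (adjoint B y) : ℂ) = 0 := by
        intro x
        rw [adjoint_inner_right]
        exact (Submodule.mem_orthogonal RB y).mp hy (B x) ⟨x, rfl⟩
      have h2 : adjoint B y = 0 := inner_self_eq_zero.mp (h1 (adjoint B y))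
      have h3 : A (P y) = 0 := by
        rw [← ContinuousLinearMap.comp_apply, ← hBadj]; exact h2
      have h4 : P y = 0 := hinj (by rw [h3, map_zero])
      exact (hPzero y).mp h4
    · intro hy
      have h6 : adjoint B y = 0 := by
        rw [hBadj]
        show A (P y) = 0
        rw [(hPzero y).mpr hy, map_zero]
      rw [Submodule.mem_orthogonal]
      rintro _ ⟨x, rfl⟩
      calc (inner ℂ (B x) y : ℂ) = inner ℂ x (adjoint B y) := (adjoint_inner_right B x y).symm
        _ = 0 := by rw [h6, inner_zero_right]
  have hRBclosure : RB.topologicalClosure = M := by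
    have h1 : RBᗮᗮ = RB.topologicalClosure :=
      Submodule.orthogonal_orthogonal_eq_closure (K := RB)
    have h2 : Mᗮᗮ = M := Submodule.orthogonal_orthogonal (K := M)
    rw [← h1, hRBorth, h2]
  have hWclosedrange : IsClosed (Set.range ⇑W) := by
    have hWiso : Isometry ⇑W := by
      refine AddMonoidHomClass.isometry_of_norm W hWnorm
    exact hWiso.isClosedEmbedding.isClosed_range
  have hrangeW : Set.range ⇑W = (M : Set H) := by
    apply Set.Subset.antisymm
    · rintro _ ⟨z, rfl⟩
      exact hWmemM z
    · have h1 : (RB : Set H) ⊆ Set.range ⇑W := by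
        rintro _ ⟨x, rfl⟩
        exact ⟨S x, hWeq x⟩
      have h2 : closure (RB : Set H) ⊆ Set.range ⇑W := by
        rw [← hWclosedrange.closure_eq]
        exact closure_mono h1
      rw [← hRBclosure, Submodule.topologicalClosure_coe]
      exact h2
  -- conclusion
  refine ⟨W, hWisom, hadjWA, ?_, ?_, ?_⟩
  · -- ∀ y, A (W y) ∈ dom T₀ and T₀ (A (W y)) = W y
    intro y
    obtain ⟨x, hx⟩ := (hMmem (W y)).mp (hWmemM y)
    have hAx : A (W y) = (x : H) := by rw [← hx, hrestr x]
    have hy : A (W y) ∈ T₀.domain := hAx ▸ x.2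
    refine ⟨hy, ?_⟩
    have : (⟨A (W y), hy⟩ : T₀.domain) = x := Subtype.ext hAx
    rw [this, hx]
  · -- dom T₀ = { A (W y) }
    ext z
    constructor
    · intro hz
      have hTz : T₀ ⟨z, hz⟩ ∈ Set.range ⇑W := by
        rw [hrangeW]; exact hMT _
      obtain ⟨y, hy⟩ := hTz
      refine ⟨y, ?_⟩
      simp only
      rw [hy, hrestr]
    · rintro ⟨y, rfl⟩
      obtain ⟨x, hx⟩ := (hMmem (W y)).mp (hWmemM y)
      have hAx : A (W y) = (x : H) := by rw [← hx, hrestr x]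
      simp only
      rw [hAx]
      exact x.2
  · -- range T₀ = range W
    apply SetLike.coe_injective
    rw [LinearMap.coe_range]
    exact hrangeW.symm
end

section
/- Let H be a complex Hilbert space, let A be a bounded, self-adjoint, injective operator on H, and let V be an isometry on H with V* ∘ A = A ∘ V. Then A ∘ V is injective with dense range, and there is an unbounded operator T₀ on H with domain dom T₀ = {A (V y) : y ∈ H} given by T₀ (A (V y)) = V y (well-defined since A ∘ V is injective), which satisfies: (1) T₀ is densely defined; (2) T₀ is symmetric; (3) T₀ is closed (its graph is closed in H × H); (4) A (T₀ x) = x for every x ∈ dom T₀; (5) ‖T₀ x‖ ≥ ‖x‖ / ‖A‖ for every x ∈ dom T₀; and (6) the range of T₀ equals range V. -/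
open ContinuousLinearMap

theorem closed_symmetric_restriction_from_hankel_isometry
    {H : Type*} [NormedAddCommGroup H] [InnerProductSpace ℂ H] [CompleteSpace H]
    (A V : H →L[ℂ] H)
    (hA : IsSelfAdjoint A)
    (hinj : Function.Injective A)
    (hV : adjoint V ∘L V = 1)
    (hHankel : adjoint V ∘L A = A ∘L V) :
    Function.Injective (A ∘L V) ∧
    DenseRange (A ∘L V) ∧
    ∃ T₀ : H →ₗ.[ℂ] H,
      T₀.domain = LinearMap.range ((A ∘L V : H →L[ℂ] H) : H →ₗ[ℂ] H) ∧
      (∀ y : H, ∃ hy : A (V y) ∈ T₀.domain, T₀ ⟨A (V y), hy⟩ = V y) ∧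
      Dense (T₀.domain : Set H) ∧
      (∀ x y : T₀.domain, (inner ℂ (T₀ x) (y : H) : ℂ) = inner ℂ (x : H) (T₀ y)) ∧
      T₀.IsClosed ∧
      (∀ x : T₀.domain, A (T₀ x) = x) ∧
      (∀ x : T₀.domain, ‖(x : H)‖ / ‖A‖ ≤ ‖T₀ x‖) ∧
      LinearMap.range T₀.toFun = LinearMap.range (V : H →ₗ[ℂ] H) := by
  have hVnorm : ∀ x, ‖V x‖ = ‖x‖ := V.norm_map_iff_adjoint_comp_self.mpr hV
  have hVinj : Function.Injective V := by
    intro x y h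
    have : adjoint V (V x) = adjoint V (V y) := congrArg _ h
    simpa [← ContinuousLinearMap.comp_apply, hV] using this
  set B := A ∘L V with hBdef
  have hBinj : Function.Injective B := by
    intro x y h
    exact hVinj (hinj h)
  have hBsa : IsSelfAdjoint B := by
    rw [isSelfAdjoint_iff', hBdef, adjoint_comp, hA.adjoint_eq, hHankel]
  have hBsym : ∀ x y : H, (inner ℂ (B x) y : ℂ) = inner ℂ x (B y) := by
    intro x y
    nth_rewrite 1 [← hBsa.adjoint_eq]
    rw [adjoint_inner_left]
  -- dense range
  have hBdense : Dense (LinearMap.range (B : H →ₗ[ℂ] H) : Set H) := by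
    rw [Submodule.dense_iff_topologicalClosure_eq_top,
      Submodule.topologicalClosure_eq_top_iff]
    rw [Submodule.eq_bot_iff]
    intro x hx
    have h0 : B x = 0 := by
      have := hx (B (B x)) ⟨B x, rfl⟩
      have h2 : (inner ℂ (B x) (B x) : ℂ) = 0 := (hBsym (B x) x).symm.trans this
      exact inner_self_eq_zero.mp h2
    have := hBinj (show B x = B 0 by simpa using h0)
    simpa using this
  have hDR : DenseRange ⇑B := by
    have : Set.range ⇑B = (LinearMap.range (B : H →ₗ[ℂ] H) : Set H) := by
      ext z; simp [LinearMap.mem_range]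
    rw [DenseRange, this]; exact hBdense
  -- the equivalence
  let e : H ≃ₗ[ℂ] LinearMap.range (B : H →ₗ[ℂ] H) :=
    LinearEquiv.ofInjective (B : H →ₗ[ℂ] H) hBinj
  have hrangeeq : LinearMap.range (B : H →ₗ[ℂ] H) = LinearMap.range (B : H →ₗ[ℂ] H) := rfl
  let T₀ : H →ₗ.[ℂ] H :=
    ⟨LinearMap.range (B : H →ₗ[ℂ] H), (V : H →ₗ[ℂ] H) ∘ₗ (e.symm.toLinearMap)⟩
  have he : ∀ a : H, e a = ⟨B a, ⟨a, rfl⟩⟩ := by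
    intro a; rfl
  have hesymm : ∀ (a : H) (h : B a ∈ LinearMap.range (B : H →ₗ[ℂ] H)), e.symm ⟨B a, h⟩ = a := by
    intro a h
    apply e.injective
    rw [LinearEquiv.apply_symm_apply, he]
  have hT : ∀ (a : H) (h : B a ∈ T₀.domain), T₀ ⟨B a, h⟩ = V a := by
    intro a h
    show V (e.symm ⟨B a, h⟩) = V a
    rw [hesymm]
  have hTall : ∀ x : T₀.domain, ∃ a : H, (x : H) = B a ∧ T₀ x = V a := by
    rintro ⟨x, a, rfl⟩
    exact ⟨a, rfl, hT a ⟨a, rfl⟩⟩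
  refine ⟨hBinj, hDR, T₀, rfl, ?_, hBdense, ?_, ?_, ?_, ?_, ?_⟩
  · intro y
    exact ⟨⟨y, rfl⟩, hT y ⟨y, rfl⟩⟩
  · -- symmetric
    rintro x y
    obtain ⟨a, hxa, hTa⟩ := hTall x
    obtain ⟨b, hyb, hTb⟩ := hTall y
    rw [hTa, hTb, hxa, hyb]
    calc (inner ℂ (V a) (B b) : ℂ) = inner ℂ (V a) (A (V b)) := rfl
      _ = inner ℂ (A (V a)) (V b) := by
          nth_rewrite 2 [← hA.adjoint_eq]
          rw [adjoint_inner_left]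
      _ = inner ℂ (B a) (V b) := rfl
  · -- closed
    have hgraph : (T₀.graph : Set (H × H)) = Set.range (fun a : H => ((B a, V a) : H × H)) := by
      ext p
      constructor
      · intro hp
        rw [SetLike.mem_coe, LinearPMap.mem_graph_iff] at hp
        obtain ⟨x, hx1, hx2⟩ := hp
        obtain ⟨a, hxa, hTa⟩ := hTall x
        exact ⟨a, Prod.ext (by show B a = p.1; rw [← hxa, hx1]) (by show V a = p.2; rw [← hTa, hx2])⟩
      · rintro ⟨a, rfl⟩
        rw [SetLike.mem_coe, LinearPMap.mem_graph_iff]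
        exact ⟨⟨B a, ⟨a, rfl⟩⟩, rfl, hT a ⟨a, rfl⟩⟩
    show _root_.IsClosed (T₀.graph : Set (H × H))
    rw [hgraph]
    have hanti : AntilipschitzWith 1 (fun a : H => ((B a, V a) : H × H)) := by
      refine AntilipschitzWith.of_le_mul_dist ?_
      intro x y
      simp only [dist_eq_norm, NNReal.coe_one, one_mul, Prod.norm_def]
      calc ‖x - y‖ = ‖V x - V y‖ := by rw [← map_sub, hVnorm]
        _ ≤ max ‖B x - B y‖ ‖V x - V y‖ := le_max_right _ _
        _ = _ := by simp [Prod.norm_def]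
    exact (hanti.isClosedEmbedding ((B.prod V).uniformContinuous)).isClosed_range
  · rintro x
    obtain ⟨a, hxa, hTa⟩ := hTall x
    rw [hTa, hxa]; rfl
  · rintro x
    obtain ⟨a, hxa, hTa⟩ := hTall x
    rw [hTa, hxa]
    rcases eq_or_lt_of_le (norm_nonneg A) with h0 | h0
    · have : B a = A (V a) := rfl
      have hAa : ‖A (V a)‖ = 0 := by
        have := A.le_opNorm (V a)
        nlinarith [norm_nonneg (A (V a)), norm_nonneg (V a)]
      rw [show ‖(B a : H)‖ = 0 from hAa, zero_div]
      exact norm_nonneg _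
    · rw [div_le_iff₀ h0]
      calc ‖B a‖ = ‖A (V a)‖ := rfl
        _ ≤ ‖A‖ * ‖V a‖ := A.le_opNorm _
        _ = ‖V a‖ * ‖A‖ := mul_comm _ _
  · ext z
    simp only [LinearMap.mem_range]
    constructor
    · rintro ⟨x, rfl⟩
      obtain ⟨a, _, hTa⟩ := hTall x
      exact ⟨a, hTa.symm⟩
    · rintro ⟨a, rfl⟩
      exact ⟨⟨B a, ⟨a, rfl⟩⟩, hT a ⟨a, rfl⟩⟩
end
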